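/- With h(t) and ρ as above, the geodesic curvature θ_{j\bar k}(ρ)(t,z) vanishes for all (t,z) with z ≠ 0 and all j,k if and only if the curvature of the Hermitian metric h on the trivial bundle vanishes, i.e. h_{α\bar β, j\bar k} − Σ h_{α\bar λ, j} h^{\bar λ ν} h_{ν\bar β, \bar k} = 0 identically for all indices α, β, j, k. -/

import Mathlib

open scoped ComplexOrder

namespace Stmt12

/-- Wirtinger derivative ∂f in complex direction `v` at `p`. -/
noncomputable def wirt {E : Type*} [NormedAddCommGroup E] [NormedSpace ℂ E]
    (f : E → ℂ) (v : E) (p : E) : ℂ :=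
  (fderiv ℝ f p v - Complex.I * fderiv ℝ f p (Complex.I • v)) / 2

/-- Conjugate Wirtinger derivative ∂̄f in direction `v` at `p`. -/
noncomputable def wirtBar {E : Type*} [NormedAddCommGroup E] [NormedSpace ℂ E]
    (f : E → ℂ) (v : E) (p : E) : ℂ :=
  (fderiv ℝ f p v + Complex.I * fderiv ℝ f p (Complex.I • v)) / 2

variable {m n : ℕ}

/-- h_{αβ̄,j} -/
noncomputable def dhj (h : (Fin m → ℂ) → Matrix (Fin n) (Fin n) ℂ) (j : Fin m)
    (α β : Fin n) : (Fin m → ℂ) → ℂ :=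
  wirt (fun t => h t α β) (Pi.single j 1)

/-- h_{αβ̄,k̄} -/
noncomputable def dhkbar (h : (Fin m → ℂ) → Matrix (Fin n) (Fin n) ℂ) (k : Fin m)
    (α β : Fin n) : (Fin m → ℂ) → ℂ :=
  wirtBar (fun t => h t α β) (Pi.single k 1)

/-- h_{αβ̄,jk̄} -/
noncomputable def dhjkbar (h : (Fin m → ℂ) → Matrix (Fin n) (Fin n) ℂ) (j k : Fin m)
    (α β : Fin n) : (Fin m → ℂ) → ℂ :=
  wirtBar (dhj h j α β) (Pi.single k 1)

/-- the curvature coefficient h_{αβ̄,jk̄} − Σ h_{αλ̄,j} h^{λ̄ν} h_{νβ̄,k̄} of the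
    Hermitian metric h on the trivial bundle. -/
noncomputable def curvCoeff (h : (Fin m → ℂ) → Matrix (Fin n) (Fin n) ℂ)
    (Hinv : (Fin m → ℂ) → Matrix (Fin n) (Fin n) ℂ) (j k : Fin m) (α β : Fin n)
    (t : Fin m → ℂ) : ℂ :=
  dhjkbar h j k α β t - ∑ lam, ∑ ν, dhj h j α lam t * Hinv t lam ν * dhkbar h k ν β t

lemma sesq_eq_zero {n : ℕ} (M : Matrix (Fin n) (Fin n) ℂ)
    (hq : ∀ z : Fin n → ℂ, ∑ α, ∑ β, M α β * z α * (starRingEnd ℂ) (z β) = 0) :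
    M = 0 := by
  set T : EuclideanSpace ℂ (Fin n) →ₗ[ℂ] EuclideanSpace ℂ (Fin n) :=
    { toFun := fun z => WithLp.toLp 2 (M.transpose.mulVec z)
      map_add' := fun x y => by simp [Matrix.mulVec_add]
      map_smul' := fun c x => by simp [Matrix.mulVec_smul] } with hTdef
  have hinner : ∀ z : EuclideanSpace ℂ (Fin n), (inner ℂ (T z) z : ℂ) = 0 := by
    intro z
    have h1 : (inner ℂ z (T z) : ℂ) = ∑ α, ∑ β, M α β * z α * (starRingEnd ℂ) (z β) := by
      simp only [PiLp.inner_apply, RCLike.inner_apply, hTdef, LinearMap.coe_mk, AddHom.coe_mk,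
        Matrix.mulVec, dotProduct, Matrix.transpose_apply, Finset.mul_sum, Finset.sum_mul]
      rw [Finset.sum_comm]
    have h2 : (inner ℂ z (T z) : ℂ) = 0 := by rw [h1]; exact hq z
    have h3 := inner_conj_symm (𝕜 := ℂ) (T z) z
    rw [h2] at h3
    simpa using h3.symm
  have hT : T = 0 := (inner_map_self_eq_zero T).mp hinner
  ext α β
  have h3 := LinearMap.congr_fun hT (WithLp.toLp 2 (Pi.single α 1))
  simp only [hTdef, LinearMap.coe_mk, AddHom.coe_mk, LinearMap.zero_apply] at h3
  have h4 := congrArg (fun v => v β) h3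
  simpa [Matrix.mulVec_single] using h4

/-- the geodesic curvature θ_{jk̄}(ρ)(t,z) = Σ curvCoeff · z^α z̄^β vanishes
    for all z ≠ 0 and all j,k iff the curvature of the Hermitian metric h vanishes
    identically (the Semmes interpolation criterion). -/
theorem geodesic_curvature_vanishes_iff_flat
    (h : (Fin m → ℂ) → Matrix (Fin n) (Fin n) ℂ)
    (hsm : ∀ α β, ContDiff ℝ (⊤ : ℕ∞) fun t => h t α β)
    (hherm : ∀ t, (h t).IsHermitian) (hpd : ∀ t, (h t).PosDef)
    (Hinv : (Fin m → ℂ) → Matrix (Fin n) (Fin n) ℂ)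
    (hH1 : ∀ t, h t * Hinv t = 1) (hH2 : ∀ t, Hinv t * h t = 1) :
    (∀ (j k : Fin m) (t : Fin m → ℂ) (z : Fin n → ℂ), z ≠ 0 →
        (∑ α, ∑ β, curvCoeff h Hinv j k α β t * z α * (starRingEnd ℂ) (z β)) = 0) ↔
      (∀ (j k : Fin m) (α β : Fin n) (t : Fin m → ℂ), curvCoeff h Hinv j k α β t = 0) := by
  constructor
  · intro hz j k α β t
    have hq : ∀ z : Fin n → ℂ,
        ∑ α, ∑ β, curvCoeff h Hinv j k α β t * z α * (starRingEnd ℂ) (z β) = 0 := by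
      intro z
      by_cases hz0 : z = 0
      · subst hz0; simp
      · exact hz j k t z hz0
    have := sesq_eq_zero (Matrix.of fun α β => curvCoeff h Hinv j k α β t) hq
    exact congrFun (congrFun this α) β
  · intro hc j k t z _
    simp [hc j k]


end Stmt12
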